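/- Let (G, ε) be an indexed group and H →(j) G →(π) Q → 1 an exact sequence of groups (π surjective, ker π = image of j). Set G⁰ = ker ε, H⁰ = ker(ε ∘ j), E = (ε ∘ j)(H), and Q⁰ = { π(g) : g ∈ G, ε(g) ∈ E }. Then the sequence H⁰ → G⁰/[G⁰,G⁰] → Q⁰/[Q⁰,Q⁰] → 0 is exact: the homomorphism of abelianizations induced by π|G⁰ : G⁰ → Q⁰ is surjective, and its kernel equals the subgroup of G⁰/[G⁰,G⁰] generated by the image of H⁰ under j followed by the abelianization projection. (Lemma 6.3, last assertion.) -/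
import Mathlib

private lemma hof_surj {K : Type*} [Group K] :
    Function.Surjective (Abelianization.of (G := K)) := fun x =>
  QuotientGroup.induction_on x fun g => ⟨g, rfl⟩


/-- Lemma 6.3, last assertion: for an indexed group `(G, ε)` and an exact sequence
`H → G → Q → 1`, with `G⁰ = ker ε`, `H⁰ = ker (ε ∘ j)`, `E = (ε ∘ j)(H)`,
`Q⁰ = { π g | ε g ∈ E }` and `p : G⁰ → Q⁰` the restriction of `π`, the sequence
`H⁰ → G⁰/[G⁰,G⁰] → Q⁰/[Q⁰,Q⁰] → 0` is exact: the induced map of abelianizations is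
surjective and its kernel is the subgroup generated by the image of `H⁰`. -/
theorem indexed_group_exact_sequence_abelianizations
    {H G Q : Type*} [Group H] [Group G] [Group Q]
    (j : H →* G) (π : G →* Q)
    (hsurj : Function.Surjective π)
    (hexact : MonoidHom.ker π = j.range)
    (ε : G → ℤ) (hε : ∀ g₁ g₂ : G, ε (g₁ * g₂) = ε g₁ + ε g₂)
    (G₀ : Subgroup G) (hG₀ : ∀ g : G, g ∈ G₀ ↔ ε g = 0)
    (Q₀ : Subgroup Q)
    (hQ₀ : ∀ x : Q, x ∈ Q₀ ↔ ∃ g : G, π g = x ∧ ∃ h : H, ε (j h) = ε g)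
    (p : ↥G₀ →* ↥Q₀) (hp : ∀ g : ↥G₀, ((p g : ↥Q₀) : Q) = π (g : G)) :
    Function.Surjective (Abelianization.map p) ∧
    MonoidHom.ker (Abelianization.map p) =
      Subgroup.closure
        { x : Abelianization ↥G₀ | ∃ (h : H) (hh : ε (j h) = 0),
            x = Abelianization.of (⟨j h, (hG₀ (j h)).mpr hh⟩ : ↥G₀) } := by
  have hε1 : ε 1 = 0 := by have := hε 1 1; simpa using this
  have hεinv : ∀ g : G, ε g⁻¹ = - ε g := by
    intro g
    have h2 := hε g g⁻¹
    rw [mul_inv_cancel, hε1] at h2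
    omega
  have hπj : ∀ h : H, π (j h) = 1 := by
    intro h
    have : j h ∈ MonoidHom.ker π := by rw [hexact]; exact ⟨h, rfl⟩
    exact this
  -- surjectivity of p
  have hpsurj : Function.Surjective p := by
    rintro ⟨q, hq⟩
    obtain ⟨g, hg, h, hh⟩ := (hQ₀ q).mp hq
    refine ⟨⟨(j h)⁻¹ * g, (hG₀ _).mpr ?_⟩, ?_⟩
    · rw [hε, hεinv]; omega
    · apply Subtype.ext
      rw [hp]
      simp [map_mul, hπj h, hg]
  constructor
  · intro x
    obtain ⟨q, rfl⟩ := hof_surj x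
    obtain ⟨g, rfl⟩ := hpsurj q
    exact ⟨Abelianization.of g, Abelianization.map_of p g⟩
  · apply le_antisymm
    · intro x hx
      obtain ⟨g, rfl⟩ := hof_surj x
      have h1 : Abelianization.of (p g) = 1 := by
        rw [← Abelianization.map_of p g]; exact hx
      have h2 : p g ∈ commutator ↥Q₀ := (QuotientGroup.eq_one_iff _).mp h1
      have h3 : commutator ↥Q₀ = Subgroup.map p (commutator ↥G₀) := by
        rw [commutator_def, commutator_def, Subgroup.map_commutator,
          Subgroup.map_top_of_surjective p hpsurj]
      rw [h3] at h2
      obtain ⟨c, hc, hpc⟩ := h2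
      have hgc : (g : G) * (c : G)⁻¹ ∈ MonoidHom.ker π := by
        have h4 : p (g * c⁻¹) = 1 := by
          rw [map_mul, map_inv, hpc, mul_inv_cancel]
        have h5 := hp (g * c⁻¹)
        rw [h4] at h5
        simpa [MonoidHom.mem_ker] using h5.symm
      rw [hexact] at hgc
      obtain ⟨h, hh⟩ := hgc
      have hεg : ε (g : G) = 0 := (hG₀ _).mp g.2
      have hεc : ε (c : G) = 0 := (hG₀ _).mp c.2
      have hεh : ε (j h) = 0 := by
        rw [hh, hε, hεinv]; omega
      apply Subgroup.subset_closure
      refine ⟨h, hεh, ?_⟩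
      have hg_eq : g = (⟨j h, (hG₀ (j h)).mpr hεh⟩ : ↥G₀) * c := by
        apply Subtype.ext
        push_cast
        rw [hh]
        group
      rw [hg_eq, map_mul]
      have hc1 : Abelianization.of c = 1 := (QuotientGroup.eq_one_iff _).mpr hc
      rw [hc1, mul_one]
    · rw [Subgroup.closure_le]
      rintro x ⟨h, hh, rfl⟩
      have hp1 : p ⟨j h, (hG₀ (j h)).mpr hh⟩ = 1 := by
        apply Subtype.ext
        rw [hp]
        simpa using hπj h
      show Abelianization.map p (Abelianization.of _) = 1
      rw [Abelianization.map_of, hp1, map_one]
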